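/- Let d ≥ 1, σ > 0, η ∈ (0,1), and let P be a Borel probability measure on ℝ^d with mean zero that is β-sub-Gaussian with β < σ√((1−η)/(2(1+η))). Then ∫_{ℝ^d} Var_P(φ_σ(x−·)) / (P∗φ_σ(x)) dx ≤ (1−η)^{−d/2} C_{P,η}^{−1} [1 − 2(1+η)β²/((1−η)σ²)]^{−d/2}, where C_{P,η} = ∫_{ℝ^d} e^{−(1+η^{−1})‖y‖²/(2σ²)} dP(y). -/

import Mathlib

open MeasureTheory ProbabilityTheory Real Filter
open scoped ENNReal NNReal RealInnerProductSpace

/-- The isotropic Gaussian density `φ_σ` on `ℝ^d`. -/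
noncomputable def gaussDensity (d : ℕ) (σ : ℝ) (x : EuclideanSpace ℝ (Fin d)) : ℝ :=
  (2 * π * σ ^ 2) ^ (-(d : ℝ) / 2) * Real.exp (-‖x‖ ^ 2 / (2 * σ ^ 2))

/-- A probability measure `P` on `ℝ^d` is `β`-sub-Gaussian if for `X ∼ P`,
`E[exp(α · (X − E[X]))] ≤ e^{β²‖α‖²/2}` for all `α ∈ ℝ^d`. -/
def IsSubGaussian (d : ℕ) (β : ℝ) (P : Measure (EuclideanSpace ℝ (Fin d))) : Prop :=
  ∀ α : EuclideanSpace ℝ (Fin d),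
    ∫⁻ y, ENNReal.ofReal (Real.exp ⟪α, y - ∫ z, z ∂P⟫) ∂P
      ≤ ENNReal.ofReal (Real.exp (β ^ 2 * ‖α‖ ^ 2 / 2))

/-! The variance is at most the second moment `P[φ_σ(x - ·)²]`, and `‖x - y‖² ≤ (1 + η)‖x‖² +
(1 + η⁻¹)‖y‖²` bounds the convolution below by `(2πσ²)^(-d/2) e^{-(1+η)‖x‖²/(2σ²)} C_{P,η}`. The
resulting majorant is Gaussian in `x`; integrating `x` out first (Tonelli) leaves
`(2πσ²/(1-η))^(d/2) P[exp(t‖Y‖²)]` with `t = (1+η)/((1-η)σ²)`. Finally `exp(t‖y‖²)` is itself a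
Gaussian integral of `α ↦ exp⟪α, y⟫`, so a second use of Tonelli and the sub-Gaussian bound on the
moment generating function give `P[exp(t‖Y‖²)] ≤ (1 - 2tβ²)^(-d/2)`. -/

lemma ofReal_exp_neg_mul_sq_norm_add_inner {V : Type*} [NormedAddCommGroup V]
    [InnerProductSpace ℝ V] (b : ℝ) (w v : V) :
    ((Real.exp (-b * ‖v‖ ^ 2 + ⟪w, v⟫) : ℝ) : ℂ) =
      Complex.exp (-(b : ℂ) * (‖v‖ : ℂ) ^ 2 + 1 * (⟪w, v⟫ : ℂ)) := by
  push_cast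
  ring_nf

section GaussianIntegral

variable {V : Type*} [NormedAddCommGroup V] [InnerProductSpace ℝ V] [FiniteDimensional ℝ V]
  [MeasurableSpace V] [BorelSpace V]

lemma integrable_exp_neg_mul_sq_norm_add_inner {b : ℝ} (hb : 0 < b) (w : V) :
    Integrable fun v : V => Real.exp (-b * ‖v‖ ^ 2 + ⟪w, v⟫) := by
  convert (GaussianFourier.integrable_cexp_neg_mul_sq_norm_add
    (b := (b : ℂ)) (by simpa using hb) 1 w (V := V)).re using 2 with v
  rw [← ofReal_exp_neg_mul_sq_norm_add_inner]
  exact (Complex.ofReal_re _).symm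

lemma integral_exp_neg_mul_sq_norm_add_inner {b : ℝ} (hb : 0 < b) (w : V) :
    ∫ v : V, Real.exp (-b * ‖v‖ ^ 2 + ⟪w, v⟫) =
      (π / b) ^ (Module.finrank ℝ V / 2 : ℝ) * Real.exp (‖w‖ ^ 2 / (4 * b)) := by
  rw [← Complex.ofReal_inj, ← integral_complex_ofReal]
  simp_rw [ofReal_exp_neg_mul_sq_norm_add_inner]
  rw [GaussianFourier.integral_cexp_neg_mul_sq_norm_add (by simpa using hb),
    Complex.ofReal_mul, Complex.ofReal_cpow (by positivity), Complex.ofReal_exp]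
  push_cast
  ring_nf

lemma lintegral_exp_neg_mul_sq_norm_add_inner {b : ℝ} (hb : 0 < b) (w : V) :
    ∫⁻ v : V, ENNReal.ofReal (Real.exp (-b * ‖v‖ ^ 2 + ⟪w, v⟫)) =
      ENNReal.ofReal ((π / b) ^ (Module.finrank ℝ V / 2 : ℝ) * Real.exp (‖w‖ ^ 2 / (4 * b))) := by
  rw [← integral_exp_neg_mul_sq_norm_add_inner hb, ofReal_integral_eq_lintegral_ofReal
    (integrable_exp_neg_mul_sq_norm_add_inner hb w) (ae_of_all _ fun _ => (Real.exp_pos _).le)]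

lemma lintegral_exp_mul_sq_norm_sub_mul_sq_norm_sub {b c : ℝ} (hcb : c < b) (y : V) :
    ∫⁻ x : V, ENNReal.ofReal (Real.exp (c * ‖x‖ ^ 2 - b * ‖x - y‖ ^ 2)) =
      ENNReal.ofReal ((π / (b - c)) ^ (Module.finrank ℝ V / 2 : ℝ) *
        Real.exp (b * c / (b - c) * ‖y‖ ^ 2)) := by
  have hbc : 0 < b - c := sub_pos.mpr hcb
  have hsplit : ∀ x : V, ENNReal.ofReal (Real.exp (c * ‖x‖ ^ 2 - b * ‖x - y‖ ^ 2)) =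
      ENNReal.ofReal (Real.exp (-(b - c) * ‖x‖ ^ 2 + ⟪(2 * b) • y, x⟫)) *
        ENNReal.ofReal (Real.exp (-b * ‖y‖ ^ 2)) := fun x => by
    rw [← ENNReal.ofReal_mul (Real.exp_pos _).le, ← Real.exp_add, norm_sub_sq_real,
      real_inner_smul_left, real_inner_comm]
    ring_nf
  simp_rw [hsplit]
  rw [lintegral_mul_const' _ _ ENNReal.ofReal_ne_top,
    lintegral_exp_neg_mul_sq_norm_add_inner hbc, ← ENNReal.ofReal_mul (by positivity),
    mul_assoc, ← Real.exp_add, norm_smul, Real.norm_eq_abs, mul_pow, sq_abs]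
  congr 3
  field_simp
  ring

lemma lintegral_exp_mul_sq_norm_le {P : Measure V} [SFinite P] {β t : ℝ}
    (ht : 0 < t) (htβ : 2 * t * β ^ 2 < 1)
    (hP : ∀ α : V, ∫⁻ y, ENNReal.ofReal (Real.exp ⟪α, y⟫) ∂P ≤
      ENNReal.ofReal (Real.exp (β ^ 2 * ‖α‖ ^ 2 / 2))) :
    ∫⁻ y, ENNReal.ofReal (Real.exp (t * ‖y‖ ^ 2)) ∂P ≤
      ENNReal.ofReal ((1 - 2 * t * β ^ 2) ^ (-(Module.finrank ℝ V : ℝ) / 2)) := by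
  set n : ℝ := (Module.finrank ℝ V : ℝ)
  set u : ℝ := (4 * t)⁻¹
  set s : ℝ := u - β ^ 2 / 2
  have hu : 0 < u := by positivity
  have htβ' : 0 < 1 - 2 * t * β ^ 2 := by linarith
  have hsu : s = u * (1 - 2 * t * β ^ 2) := by
    simp only [u, s]
    field_simp
    ring
  have hs : 0 < s := hsu ▸ mul_pos hu htβ'
  have hlin : ∀ y : V, ENNReal.ofReal (Real.exp (t * ‖y‖ ^ 2)) =
      ENNReal.ofReal ((u / π) ^ (n / 2)) *
        ∫⁻ α, ENNReal.ofReal (Real.exp (-u * ‖α‖ ^ 2 + ⟪y, α⟫)) := fun y => by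
    rw [lintegral_exp_neg_mul_sq_norm_add_inner hu, ← ENNReal.ofReal_mul (by positivity),
      ← mul_assoc, ← Real.mul_rpow (by positivity) (by positivity),
      show u / π * (π / u) = 1 by field_simp, Real.one_rpow, one_mul]
    congr 2
    simp only [u]
    field_simp
  have hmgf : ∀ α : V, ∫⁻ y, ENNReal.ofReal (Real.exp (-u * ‖α‖ ^ 2 + ⟪y, α⟫)) ∂P ≤
      ENNReal.ofReal (Real.exp (-s * ‖α‖ ^ 2 + ⟪(0 : V), α⟫)) := fun α => by
    have hsplit : ∀ y : V, ENNReal.ofReal (Real.exp (-u * ‖α‖ ^ 2 + ⟪y, α⟫)) =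
        ENNReal.ofReal (Real.exp (-u * ‖α‖ ^ 2)) * ENNReal.ofReal (Real.exp ⟪α, y⟫) := fun y => by
      rw [← ENNReal.ofReal_mul (Real.exp_pos _).le, ← Real.exp_add, real_inner_comm]
    simp_rw [hsplit]
    rw [lintegral_const_mul' _ _ ENNReal.ofReal_ne_top]
    calc _ ≤ ENNReal.ofReal (Real.exp (-u * ‖α‖ ^ 2)) *
          ENNReal.ofReal (Real.exp (β ^ 2 * ‖α‖ ^ 2 / 2)) := by gcongr; exact hP α
      _ = _ := by
        rw [← ENNReal.ofReal_mul (Real.exp_pos _).le, ← Real.exp_add, inner_zero_left, add_zero]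
        congr 2
        ring
  calc ∫⁻ y, ENNReal.ofReal (Real.exp (t * ‖y‖ ^ 2)) ∂P
      = ENNReal.ofReal ((u / π) ^ (n / 2)) *
          ∫⁻ α, ∫⁻ y, ENNReal.ofReal (Real.exp (-u * ‖α‖ ^ 2 + ⟪y, α⟫)) ∂P := by
        simp_rw [hlin]
        rw [lintegral_const_mul' _ _ ENNReal.ofReal_ne_top, lintegral_lintegral_swap (by fun_prop)]
    _ ≤ ENNReal.ofReal ((u / π) ^ (n / 2)) *
          ∫⁻ α, ENNReal.ofReal (Real.exp (-s * ‖α‖ ^ 2 + ⟪(0 : V), α⟫)) := by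
        gcongr with α
        exact hmgf α
    _ = ENNReal.ofReal ((1 - 2 * t * β ^ 2) ^ (-n / 2)) := by
        have hratio : u / π * (π / s) = (1 - 2 * t * β ^ 2)⁻¹ := by
          rw [hsu]
          field_simp
        rw [lintegral_exp_neg_mul_sq_norm_add_inner hs, norm_zero,
          ← ENNReal.ofReal_mul (by positivity)]
        congr 1
        rw [zero_pow two_ne_zero, zero_div, Real.exp_zero, mul_one,
          ← Real.mul_rpow (by positivity) (by positivity), hratio, Real.inv_rpow htβ'.le,
          ← Real.rpow_neg htβ'.le, neg_div]

lemma lintegral_lintegral_exp_mul_sq_norm_sub_le {P : Measure V} [SFinite P] {β b c : ℝ}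
    (hc : 0 < c) (hcb : c < b) (hβ : 2 * (b * c / (b - c)) * β ^ 2 < 1)
    (hP : ∀ α : V, ∫⁻ y, ENNReal.ofReal (Real.exp ⟪α, y⟫) ∂P ≤
      ENNReal.ofReal (Real.exp (β ^ 2 * ‖α‖ ^ 2 / 2))) :
    ∫⁻ x, ∫⁻ y, ENNReal.ofReal (Real.exp (c * ‖x‖ ^ 2 - b * ‖x - y‖ ^ 2)) ∂P ≤
      ENNReal.ofReal ((π / (b - c)) ^ (Module.finrank ℝ V / 2 : ℝ) *
        (1 - 2 * (b * c / (b - c)) * β ^ 2) ^ (-(Module.finrank ℝ V : ℝ) / 2)) := by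
  have hbc : 0 < b - c := sub_pos.mpr hcb
  rw [lintegral_lintegral_swap (by fun_prop)]
  simp_rw [lintegral_exp_mul_sq_norm_sub_mul_sq_norm_sub hcb,
    ENNReal.ofReal_mul (Real.rpow_nonneg (div_pos Real.pi_pos hbc).le _)]
  rw [lintegral_const_mul' _ _ ENNReal.ofReal_ne_top]
  gcongr
  exact lintegral_exp_mul_sq_norm_le (by have := hc.trans hcb; positivity) hβ hP

end GaussianIntegral

lemma norm_sub_sq_le_one_add_mul_sq_add {E : Type*} [SeminormedAddCommGroup E] {η : ℝ}
    (hη : 0 < η) (x y : E) :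
    ‖x - y‖ ^ 2 ≤ (1 + η) * ‖x‖ ^ 2 + (1 + η⁻¹) * ‖y‖ ^ 2 :=
  calc ‖x - y‖ ^ 2 ≤ (‖x‖ + ‖y‖) ^ 2 := by gcongr; exact norm_sub_le x y
    _ = ‖x‖ ^ 2 + 2 * ‖x‖ * ‖y‖ + ‖y‖ ^ 2 := by ring
    _ ≤ ‖x‖ ^ 2 + (η * ‖x‖ ^ 2 + η⁻¹ * ‖y‖ ^ 2) + ‖y‖ ^ 2 := by
        gcongr; exact two_mul_le_add_mul_sq hη
    _ = (1 + η) * ‖x‖ ^ 2 + (1 + η⁻¹) * ‖y‖ ^ 2 := by ring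

section GaussDensity

variable {d : ℕ} {σ : ℝ}

@[fun_prop]
lemma continuous_gaussDensity : Continuous (gaussDensity d σ) := by
  unfold gaussDensity
  fun_prop

lemma gaussDensity_nonneg (x : EuclideanSpace ℝ (Fin d)) : 0 ≤ gaussDensity d σ x := by
  unfold gaussDensity
  positivity

lemma gaussDensity_le (x : EuclideanSpace ℝ (Fin d)) :
    gaussDensity d σ x ≤ (2 * π * σ ^ 2) ^ (-(d : ℝ) / 2) := by
  refine mul_le_of_le_one_right (by positivity) (Real.exp_le_one_iff.mpr ?_)
  exact div_nonpos_of_nonpos_of_nonneg (neg_nonpos.mpr (by positivity)) (by positivity)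

lemma gaussDensity_sq (x : EuclideanSpace ℝ (Fin d)) :
    gaussDensity d σ x ^ 2 =
      ((2 * π * σ ^ 2) ^ (-(d : ℝ) / 2)) ^ 2 * Real.exp (-(σ ^ 2)⁻¹ * ‖x‖ ^ 2) := by
  rw [gaussDensity, mul_pow, sq (Real.exp _), ← Real.exp_add]
  ring_nf

lemma gaussDensity_sub_ge {η : ℝ} (hη : 0 < η) (x y : EuclideanSpace ℝ (Fin d)) :
    (2 * π * σ ^ 2) ^ (-(d : ℝ) / 2) * Real.exp (-((1 + η) / (2 * σ ^ 2) * ‖x‖ ^ 2)) *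
        Real.exp (-(1 + η⁻¹) * ‖y‖ ^ 2 / (2 * σ ^ 2)) ≤ gaussDensity d σ (x - y) := by
  rw [gaussDensity, mul_assoc, ← Real.exp_add]
  gcongr
  have := norm_sub_sq_le_one_add_mul_sq_add hη x y
  rw [div_mul_eq_mul_div, ← neg_div, ← add_div]
  gcongr
  linarith

lemma integrable_gaussDensity_sub (P : Measure (EuclideanSpace ℝ (Fin d))) [IsFiniteMeasure P]
    (x : EuclideanSpace ℝ (Fin d)) :
    Integrable (fun y => gaussDensity d σ (x - y)) P :=
  .of_bound (by fun_prop) _ (ae_of_all _ fun y => by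
    rw [Real.norm_of_nonneg (gaussDensity_nonneg _)]
    exact gaussDensity_le _)

lemma integrable_exp_neg_mul_sq_norm_div {a : ℝ} (ha : 0 ≤ a)
    (P : Measure (EuclideanSpace ℝ (Fin d))) [IsFiniteMeasure P] :
    Integrable (fun y => Real.exp (-a * ‖y‖ ^ 2 / (2 * σ ^ 2))) P :=
  .of_bound (by fun_prop) 1 (ae_of_all _ fun y => by
    rw [Real.norm_of_nonneg (Real.exp_pos _).le, Real.exp_le_one_iff, neg_mul, neg_div,
      neg_nonpos]
    positivity)

lemma integral_gaussDensity_sub_ge {η : ℝ} (hη : 0 < η) (P : Measure (EuclideanSpace ℝ (Fin d)))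
    [IsFiniteMeasure P] (x : EuclideanSpace ℝ (Fin d)) :
    (2 * π * σ ^ 2) ^ (-(d : ℝ) / 2) * Real.exp (-((1 + η) / (2 * σ ^ 2) * ‖x‖ ^ 2)) *
        ∫ y, Real.exp (-(1 + η⁻¹) * ‖y‖ ^ 2 / (2 * σ ^ 2)) ∂P ≤
      ∫ y, gaussDensity d σ (x - y) ∂P := by
  rw [← integral_const_mul]
  exact integral_mono ((integrable_exp_neg_mul_sq_norm_div (by positivity) P).const_mul _)
    (integrable_gaussDensity_sub P x) (gaussDensity_sub_ge hη x)

lemma ofReal_variance_gaussDensity_div_le (hσ : 0 < σ) {η : ℝ} (hη : 0 < η)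
    (P : Measure (EuclideanSpace ℝ (Fin d))) [IsProbabilityMeasure P]
    (x : EuclideanSpace ℝ (Fin d)) :
    ENNReal.ofReal (variance (fun y => gaussDensity d σ (x - y)) P /
        ∫ y, gaussDensity d σ (x - y) ∂P) ≤
      ENNReal.ofReal ((2 * π * σ ^ 2) ^ (-(d : ℝ) / 2) *
          (∫ y, Real.exp (-(1 + η⁻¹) * ‖y‖ ^ 2 / (2 * σ ^ 2)) ∂P)⁻¹) *
        ∫⁻ y, ENNReal.ofReal
          (Real.exp ((1 + η) / (2 * σ ^ 2) * ‖x‖ ^ 2 - (σ ^ 2)⁻¹ * ‖x - y‖ ^ 2)) ∂P := by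
  set K := (2 * π * σ ^ 2) ^ (-(d : ℝ) / 2)
  set C := ∫ y, Real.exp (-(1 + η⁻¹) * ‖y‖ ^ 2 / (2 * σ ^ 2)) ∂P
  set c := (1 + η) / (2 * σ ^ 2)
  have hK : 0 < K := by positivity
  have hC : 0 < C := integral_exp_pos (integrable_exp_neg_mul_sq_norm_div (by positivity) P)
  have hbound : ∀ y, Real.exp (c * ‖x‖ ^ 2 - (σ ^ 2)⁻¹ * ‖x - y‖ ^ 2) ≤ Real.exp (c * ‖x‖ ^ 2) :=
    fun y => Real.exp_le_exp.mpr (sub_le_self _ (by positivity))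
  have hint : Integrable (fun y => Real.exp (c * ‖x‖ ^ 2 - (σ ^ 2)⁻¹ * ‖x - y‖ ^ 2)) P :=
    .of_bound (by fun_prop) _ (ae_of_all _ fun y => by
      rw [Real.norm_of_nonneg (Real.exp_pos _).le]; exact hbound y)
  have hvar : variance (fun y => gaussDensity d σ (x - y)) P ≤
      K ^ 2 * ∫ y, Real.exp (-(σ ^ 2)⁻¹ * ‖x - y‖ ^ 2) ∂P := by
    simpa only [Pi.pow_apply, gaussDensity_sq, integral_const_mul] using
      variance_le_expectation_sq (integrable_gaussDensity_sub (σ := σ) P x).aestronglyMeasurable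
  have hsplit : ∀ y, Real.exp (c * ‖x‖ ^ 2 - (σ ^ 2)⁻¹ * ‖x - y‖ ^ 2) =
      Real.exp (c * ‖x‖ ^ 2) * Real.exp (-(σ ^ 2)⁻¹ * ‖x - y‖ ^ 2) := fun y => by
    rw [← Real.exp_add]; ring_nf
  have hratio : variance (fun y => gaussDensity d σ (x - y)) P /
      ∫ y, gaussDensity d σ (x - y) ∂P ≤
      K * C⁻¹ * ∫ y, Real.exp (c * ‖x‖ ^ 2 - (σ ^ 2)⁻¹ * ‖x - y‖ ^ 2) ∂P :=
    calc _ ≤ K ^ 2 * (∫ y, Real.exp (-(σ ^ 2)⁻¹ * ‖x - y‖ ^ 2) ∂P) /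
          (K * Real.exp (-(c * ‖x‖ ^ 2)) * C) :=
        div_le_div₀ (by positivity) hvar (by positivity) (integral_gaussDensity_sub_ge hη P x)
      _ = _ := by
        simp_rw [hsplit, integral_const_mul, Real.exp_neg]
        field_simp
  rw [← ofReal_integral_eq_lintegral_ofReal hint (ae_of_all _ fun y => (Real.exp_pos _).le),
    ← ENNReal.ofReal_mul (by positivity)]
  exact ENNReal.ofReal_le_ofReal hratio

end GaussDensity

lemma lintegral_lintegral_exp_gauss_le {d : ℕ} {σ η β : ℝ} (hσ : 0 < σ)
    (hη : η ∈ Set.Ioo (0 : ℝ) 1) (hβ : 2 * (1 + η) * β ^ 2 / ((1 - η) * σ ^ 2) < 1)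
    (P : Measure (EuclideanSpace ℝ (Fin d))) [SFinite P] (hP : ∀ α : EuclideanSpace ℝ (Fin d),
      ∫⁻ y, ENNReal.ofReal (Real.exp ⟪α, y⟫) ∂P ≤ ENNReal.ofReal (Real.exp (β ^ 2 * ‖α‖ ^ 2 / 2))) :
    ∫⁻ x, ∫⁻ y, ENNReal.ofReal
        (Real.exp ((1 + η) / (2 * σ ^ 2) * ‖x‖ ^ 2 - (σ ^ 2)⁻¹ * ‖x - y‖ ^ 2)) ∂P ≤
      ENNReal.ofReal ((2 * π * σ ^ 2 / (1 - η)) ^ ((d : ℝ) / 2) *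
        (1 - 2 * (1 + η) * β ^ 2 / ((1 - η) * σ ^ 2)) ^ (-(d : ℝ) / 2)) := by
  obtain ⟨hη0, hη1⟩ := hη
  have hgap : (σ ^ 2)⁻¹ - (1 + η) / (2 * σ ^ 2) = (1 - η) / (2 * σ ^ 2) := by
    field_simp
    ring
  have hrate : (σ ^ 2)⁻¹ * ((1 + η) / (2 * σ ^ 2)) / ((σ ^ 2)⁻¹ - (1 + η) / (2 * σ ^ 2)) =
      (1 + η) / ((1 - η) * σ ^ 2) := by
    rw [hgap]
    field_simp
  have hcb : (1 + η) / (2 * σ ^ 2) < (σ ^ 2)⁻¹ := by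
    rw [← sub_pos, hgap]
    exact div_pos (by linarith) (by positivity)
  have := lintegral_lintegral_exp_mul_sq_norm_sub_le (by positivity) hcb
    (by rw [hrate]; convert hβ using 2; ring) hP
  rwa [finrank_euclideanSpace_fin, hrate, hgap,
    show π / ((1 - η) / (2 * σ ^ 2)) = 2 * π * σ ^ 2 / (1 - η) by field_simp,
    show 2 * ((1 + η) / ((1 - η) * σ ^ 2)) * β ^ 2 = 2 * (1 + η) * β ^ 2 / ((1 - η) * σ ^ 2) by
      ring] at this

theorem chiSq_integral_explicit_bound_general
    (d : ℕ) (σ : ℝ) (hσ : 0 < σ) (η : ℝ) (hη : η ∈ Set.Ioo (0 : ℝ) 1)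
    (β : ℝ) (hβ : 0 < β) (hβσ : β < σ * Real.sqrt ((1 - η) / (2 * (1 + η))))
    (P : Measure (EuclideanSpace ℝ (Fin d))) [IsProbabilityMeasure P]
    (hmean : ∫ z, z ∂P = 0) (hsub : IsSubGaussian d β P) :
    ∫⁻ x, ENNReal.ofReal
        (variance (fun y => gaussDensity d σ (x - y)) P / ∫ y, gaussDensity d σ (x - y) ∂P)
      ≤ ENNReal.ofReal ((1 - η) ^ (-(d : ℝ) / 2) *
          (∫ y, Real.exp (-(1 + η⁻¹) * ‖y‖ ^ 2 / (2 * σ ^ 2)) ∂P)⁻¹ *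
          (1 - 2 * (1 + η) * β ^ 2 / ((1 - η) * σ ^ 2)) ^ (-(d : ℝ) / 2)) := by
  have ⟨hη0, hη1⟩ := hη
  have h1η : 0 < 1 - η := by linarith
  have hβ' : 2 * (1 + η) * β ^ 2 / ((1 - η) * σ ^ 2) < 1 := by
    have hsq := pow_lt_pow_left₀ hβσ hβ.le two_ne_zero
    rw [mul_pow, Real.sq_sqrt (by positivity)] at hsq
    rw [div_lt_one (by positivity)]
    calc 2 * (1 + η) * β ^ 2 < 2 * (1 + η) * (σ ^ 2 * ((1 - η) / (2 * (1 + η)))) := by gcongr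
      _ = (1 - η) * σ ^ 2 := by field_simp
  have hdouble := lintegral_lintegral_exp_gauss_le hσ hη hβ' P
    fun α => by simpa [hmean] using hsub α
  refine (lintegral_mono fun x => ofReal_variance_gaussDensity_div_le hσ hη0 P x).trans ?_
  rw [lintegral_const_mul' _ _ ENNReal.ofReal_ne_top]
  refine (mul_le_mul_right hdouble _).trans_eq ?_
  rw [← ENNReal.ofReal_mul (by positivity), Real.div_rpow (by positivity) h1η.le, neg_div,
    Real.rpow_neg (by positivity), Real.rpow_neg h1η.le]
  congr 1
  field_simp

/-- **Explicit bound on the χ² integral for sub-Gaussian `P`:** for `η ∈ (0,1)` and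
mean-zero `β`-sub-Gaussian `P` with `β < σ√((1−η)/(2(1+η)))`,
`∫ Var_P(φ_σ(x−·))/(P∗φ_σ(x)) dx ≤ (1−η)^{−d/2} C_{P,η}⁻¹ (1 − 2(1+η)β²/((1−η)σ²))^{−d/2}`. -/
theorem chiSq_integral_explicit_bound
    (d : ℕ) (hd : 1 ≤ d) (σ : ℝ) (hσ : 0 < σ) (η : ℝ) (hη : η ∈ Set.Ioo (0 : ℝ) 1)
    (β : ℝ) (hβ : 0 < β) (hβσ : β < σ * Real.sqrt ((1 - η) / (2 * (1 + η))))
    (P : Measure (EuclideanSpace ℝ (Fin d))) [IsProbabilityMeasure P]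
    (hmean : ∫ z, z ∂P = 0) (hsub : IsSubGaussian d β P) :
    ∫⁻ x, ENNReal.ofReal
        (variance (fun y => gaussDensity d σ (x - y)) P / ∫ y, gaussDensity d σ (x - y) ∂P)
      ≤ ENNReal.ofReal ((1 - η) ^ (-(d : ℝ) / 2) *
          (∫ y, Real.exp (-(1 + η⁻¹) * ‖y‖ ^ 2 / (2 * σ ^ 2)) ∂P)⁻¹ *
          (1 - 2 * (1 + η) * β ^ 2 / ((1 - η) * σ ^ 2)) ^ (-(d : ℝ) / 2)) :=
  chiSq_integral_explicit_bound_general d σ hσ η hη β hβ hβσ P hmean hsub
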